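/- For every positive integer n, the map π ↦ (π°, π̂) is a bijection from NCL(n) onto the set {(α, β) : α, β ∈ NC(n), α ≪ β}. -/

import Mathlib

open scoped Classical

/-- The minimum of a finset of naturals (`0` if empty). -/
noncomputable def fmin (A : Finset ℕ) : ℕ := sInf (A : Set ℕ)

/-- The maximum of a finset of naturals (`0` if empty). -/
noncomputable def fmax (A : Finset ℕ) : ℕ := sSup (A : Set ℕ)

/-- `α` is a partition of the finite set `F ⊆ ℕ`. -/
def IsPartitionOfSet (F : Finset ℕ) (α : Finset (Finset ℕ)) : Prop :=
  (∀ V ∈ α, V.Nonempty) ∧ (∀ V ∈ α, V ⊆ F) ∧ (∀ m ∈ F, ∃ V ∈ α, m ∈ V) ∧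
    ∀ V ∈ α, ∀ W ∈ α, V ≠ W → V ∩ W = ∅

/-- `α` is a partition of `{1,…,n}`. -/
def IsPartitionOf (n : ℕ) (α : Finset (Finset ℕ)) : Prop :=
  IsPartitionOfSet (Finset.Icc 1 n) α

/-- Two distinct blocks of the family `π` cross: there are `a < b < c < d` with
`a, c` in one block and `b, d` in a different block. -/
def IsCrossing (π : Finset (Finset ℕ)) : Prop :=
  ∃ A ∈ π, ∃ B ∈ π, A ≠ B ∧
    ∃ a ∈ A, ∃ b ∈ B, ∃ c ∈ A, ∃ d ∈ B, a < b ∧ b < c ∧ c < d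

/-- `α ∈ NC(n)`: a non-crossing partition of `{1,…,n}`. -/
def IsNCPartition (n : ℕ) (α : Finset (Finset ℕ)) : Prop :=
  IsPartitionOf n α ∧ ¬ IsCrossing α

/-- Reverse refinement order `α ≤ β`: every block of `α` is contained in a block of `β`
(equivalently, every block of `β` is a union of blocks of `α`). -/
def Refines (α β : Finset (Finset ℕ)) : Prop := ∀ V ∈ α, ∃ W ∈ β, V ⊆ W

/-- The partial order `α ≪ β`: `α ≤ β` and for every block `W` of `β` there is a block
`V` of `α` containing both `min W` and `max W`. -/
def LL (α β : Finset (Finset ℕ)) : Prop :=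
  Refines α β ∧ ∀ W ∈ β, ∃ V ∈ α, fmin W ∈ V ∧ fmax W ∈ V

/-- A block `V` (of `α`) is `β`-special: some block `W` of `β` has the same min and max. -/
def SpecialBlock (β : Finset (Finset ℕ)) (V : Finset ℕ) : Prop :=
  ∃ W ∈ β, fmin V = fmin W ∧ fmax V = fmax W

/-- `V` is an outer block of `α`: no block of `α` strictly nests around it. -/
def OuterBlock (α : Finset (Finset ℕ)) (V : Finset ℕ) : Prop :=
  ∀ V' ∈ α, ¬ (fmin V' < fmin V ∧ fmax V < fmax V')

/-- `π` is a linked partition of the finite set `F ⊆ ℕ`. -/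
def IsLinkedPartitionOfSet (F : Finset ℕ) (π : Finset (Finset ℕ)) : Prop :=
  (∀ A ∈ π, A.Nonempty) ∧ (∀ A ∈ π, A ⊆ F) ∧ (∀ m ∈ F, ∃ A ∈ π, m ∈ A) ∧
    ∀ A ∈ π, ∀ B ∈ π, A ≠ B →
      A ∩ B = ∅ ∨
        (2 ≤ A.card ∧ 2 ≤ B.card ∧ (A ∩ B).card = 1 ∧ fmin A ≠ fmin B ∧
          ∀ x ∈ A ∩ B, x = fmin A ∨ x = fmin B)

/-- `π ∈ NCL(F)`: a non-crossing linked partition of the finite set `F`. -/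
def IsNCLOfSet (F : Finset ℕ) (π : Finset (Finset ℕ)) : Prop :=
  IsLinkedPartitionOfSet F π ∧ ¬ IsCrossing π

/-- `π ∈ NCL(n)`: a non-crossing linked partition of `{1,…,n}`. -/
def IsNCL (n : ℕ) (π : Finset (Finset ℕ)) : Prop :=
  IsNCLOfSet (Finset.Icc 1 n) π

/-- The number of blocks of `π` containing `m`. -/
noncomputable def coverCount (π : Finset (Finset ℕ)) (m : ℕ) : ℕ :=
  (π.filter fun A => m ∈ A).card

/-- `m` is singly-covered by `π`: it lies in exactly one block. -/
def SinglyCovered (π : Finset (Finset ℕ)) (m : ℕ) : Prop := coverCount π m = 1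

/-- `m` is doubly-covered by `π`: it lies in exactly two blocks. -/
def DoublyCovered (π : Finset (Finset ℕ)) (m : ℕ) : Prop := coverCount π m = 2

/-- The partition `π̂` generated by the blocks of `π`: its blocks are the connected
components of the ground set under the relation of lying in a common block of `π`. -/
noncomputable def genPart (π : Finset (Finset ℕ)) : Finset (Finset ℕ) :=
  (π.sup id).image fun m =>
    (π.sup id).filter fun x =>
      Relation.EqvGen (fun a b => ∃ A ∈ π, a ∈ A ∧ b ∈ A) m x

/-- The unlinking `π̌` of a linked partition `π`. -/
noncomputable def unlink (π : Finset (Finset ℕ)) : Finset (Finset ℕ) :=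
  π.image fun A => if SinglyCovered π (fmin A) then A else A.erase (fmin A)

/-- The block of `α` containing `m` (empty if there is none). -/
noncomputable def blockOf (α : Finset (Finset ℕ)) (m : ℕ) : Finset ℕ :=
  (α.filter fun V => m ∈ V).sup id

/-- The successor of `m` in the cycle on the block `V` (elements in increasing order). -/
noncomputable def nextInBlock (V : Finset ℕ) (m : ℕ) : ℕ :=
  if m = fmax V then fmin V else fmin (V.filter fun x => m < x)

/-- The predecessor of `m` in the cycle on the block `V`. -/
noncomputable def prevInBlock (V : Finset ℕ) (m : ℕ) : ℕ :=
  if m = fmin V then fmax V else fmax (V.filter fun x => x < m)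

/-- The permutation `P_α` associated to a partition `α`, as a function: each block
`{i₁ < i₂ < ⋯ < iₘ}` becomes the cycle `i₁ ↦ i₂ ↦ ⋯ ↦ iₘ ↦ i₁`. -/
noncomputable def permOf (α : Finset (Finset ℕ)) (m : ℕ) : ℕ :=
  if m ∈ blockOf α m then nextInBlock (blockOf α m) m else m

/-- The inverse permutation `P_α⁻¹`, as a function. -/
noncomputable def permOfInv (α : Finset (Finset ℕ)) (m : ℕ) : ℕ :=
  if m ∈ blockOf α m then prevInBlock (blockOf α m) m else m

/-- The action `τ·α` of a map `τ` on a partition `α = {V₁,…,V_p}`, giving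
`{τ(V₁),…,τ(V_p)}`. -/
def mapPart (τ : ℕ → ℕ) (α : Finset (Finset ℕ)) : Finset (Finset ℕ) :=
  α.image fun V => V.image τ

/-- The cycled unlinking `π° := P_{π̂}⁻¹ · π̌`. -/
noncomputable def cycUnlink (π : Finset (Finset ℕ)) : Finset (Finset ℕ) :=
  mapPart (permOfInv (genPart π)) (unlink π)

/-- `NC(n)` as a finset. -/
noncomputable def NCF (n : ℕ) : Finset (Finset (Finset ℕ)) :=
  ((Finset.Icc 1 n).powerset.powerset).filter (IsNCPartition n)

/-- `NCL(n)` as a finset. -/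
noncomputable def NCLF (n : ℕ) : Finset (Finset (Finset ℕ)) :=
  ((Finset.Icc 1 n).powerset.powerset).filter (IsNCL n)

/-- The restriction `π|_E`: the blocks of `π` contained in `E`. -/
def restrictL (π : Finset (Finset ℕ)) (E : Finset ℕ) : Finset (Finset ℕ) :=
  π.filter fun A => A ⊆ E

/-- The partition `β₀` obtained from `β` by leaving blocks of size `≤ 2` intact and
breaking each block `W` with `|W| ≥ 3` into the doubleton `{min W, max W}` together
with `|W| - 2` singletons. -/
noncomputable def breakBlocks (β : Finset (Finset ℕ)) : Finset (Finset ℕ) :=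
  β.biUnion fun W =>
    if W.card ≤ 2 then {W}
    else insert {fmin W, fmax W} ((W \ {fmin W, fmax W}).image fun x => ({x} : Finset ℕ))


/-!
The inverse map is explicit. Given `α ≪ β`, send each block `V` of `α`, lying in the block `W`
of `β`, to `P_β(V)`, and add `min V` back unless `V` is the block of `α` containing `min W` and
`max W`. The result `ψ(α, β)` is a non-crossing linked partition with `ψ̂ = β` and `ψ̌ = P_β · α`,
so `ψ° = α`. Conversely `ψ(π°, π̂) = π` because, in a non-crossing linked partition, the block
whose minimum is singly covered is the block of the minimum of its connected component, and no
element of a block's component lies strictly between the two smallest elements of the block: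
so `P_{π̂}` undoes the shift of `π̌` block by block, and re-inserting minima undoes the unlinking.
-/

open Finset

section MinMax

lemma fmin_mem {A : Finset ℕ} (h : A.Nonempty) : fmin A ∈ A := by
  have : sInf (A : Set ℕ) ∈ (A : Set ℕ) := Nat.sInf_mem (by exact_mod_cast h)
  exact_mod_cast this

lemma fmin_le {A : Finset ℕ} {a : ℕ} (ha : a ∈ A) : fmin A ≤ a :=
  Nat.sInf_le (by exact_mod_cast ha)

lemma fmax_mem {A : Finset ℕ} (h : A.Nonempty) : fmax A ∈ A := by
  have : sSup (A : Set ℕ) ∈ (A : Set ℕ) :=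
    Nat.sSup_mem (by exact_mod_cast h) A.finite_toSet.bddAbove
  exact_mod_cast this

lemma le_fmax {A : Finset ℕ} {a : ℕ} (ha : a ∈ A) : a ≤ fmax A :=
  le_csSup A.finite_toSet.bddAbove (by exact_mod_cast ha)

lemma fmin_eq_of_forall_le {A : Finset ℕ} {a : ℕ} (ha : a ∈ A) (h : ∀ x ∈ A, a ≤ x) :
    fmin A = a :=
  le_antisymm (fmin_le ha) (h _ (fmin_mem ⟨a, ha⟩))

lemma fmax_eq_of_forall_le {A : Finset ℕ} {a : ℕ} (ha : a ∈ A) (h : ∀ x ∈ A, x ≤ a) :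
    fmax A = a :=
  le_antisymm (h _ (fmax_mem ⟨a, ha⟩)) (le_fmax ha)

lemma fmin_erase_mem {A : Finset ℕ} (h : (A.erase (fmin A)).Nonempty) :
    fmin (A.erase (fmin A)) ∈ A :=
  mem_of_mem_erase (fmin_mem h)

lemma fmin_lt_fmin_erase {A : Finset ℕ} (h : (A.erase (fmin A)).Nonempty) :
    fmin A < fmin (A.erase (fmin A)) :=
  lt_of_le_of_ne (fmin_le (fmin_erase_mem h)) (Ne.symm (ne_of_mem_erase (fmin_mem h)))

end MinMax

section Cycle

variable {V : Finset ℕ} {m : ℕ}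

lemma nextInBlock_fmax (V : Finset ℕ) : nextInBlock V (fmax V) = fmin V := if_pos rfl

lemma prevInBlock_fmin (V : Finset ℕ) : prevInBlock V (fmin V) = fmax V := if_pos rfl

lemma nonempty_filter_lt_of_ne_fmax (hm : m ∈ V) (h : m ≠ fmax V) :
    (V.filter fun x => m < x).Nonempty :=
  ⟨fmax V, mem_filter.mpr ⟨fmax_mem ⟨m, hm⟩, lt_of_le_of_ne (le_fmax hm) h⟩⟩

lemma nonempty_filter_gt_of_ne_fmin (hm : m ∈ V) (h : m ≠ fmin V) :
    (V.filter fun x => x < m).Nonempty :=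
  ⟨fmin V, mem_filter.mpr ⟨fmin_mem ⟨m, hm⟩, lt_of_le_of_ne (fmin_le hm) (Ne.symm h)⟩⟩

lemma lt_nextInBlock (hm : m ∈ V) (h : m ≠ fmax V) : m < nextInBlock V m := by
  rw [nextInBlock, if_neg h]
  exact (mem_filter.mp (fmin_mem (nonempty_filter_lt_of_ne_fmax hm h))).2

lemma nextInBlock_mem (hm : m ∈ V) : nextInBlock V m ∈ V := by
  unfold nextInBlock
  split_ifs with h
  · exact fmin_mem ⟨m, hm⟩
  · exact (mem_filter.mp (fmin_mem (nonempty_filter_lt_of_ne_fmax hm h))).1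

lemma nextInBlock_le {y : ℕ} (hy : y ∈ V) (h : m < y) : nextInBlock V m ≤ y := by
  have hne : m ≠ fmax V := fun e => absurd (le_fmax hy) (by omega)
  rw [nextInBlock, if_neg hne]
  exact fmin_le (mem_filter.mpr ⟨hy, h⟩)

lemma prevInBlock_lt (hm : m ∈ V) (h : m ≠ fmin V) : prevInBlock V m < m := by
  rw [prevInBlock, if_neg h]
  exact (mem_filter.mp (fmax_mem (nonempty_filter_gt_of_ne_fmin hm h))).2

lemma prevInBlock_mem (hm : m ∈ V) : prevInBlock V m ∈ V := by
  unfold prevInBlock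
  split_ifs with h
  · exact fmax_mem ⟨m, hm⟩
  · exact (mem_filter.mp (fmax_mem (nonempty_filter_gt_of_ne_fmin hm h))).1

lemma le_prevInBlock {y : ℕ} (hy : y ∈ V) (h : y < m) : y ≤ prevInBlock V m := by
  have hne : m ≠ fmin V := fun e => absurd (fmin_le hy) (by omega)
  rw [prevInBlock, if_neg hne]
  exact le_fmax (mem_filter.mpr ⟨hy, h⟩)

lemma prevInBlock_nextInBlock (hm : m ∈ V) : prevInBlock V (nextInBlock V m) = m := by
  by_cases h : m = fmax V
  · subst h; rw [nextInBlock_fmax, prevInBlock_fmin]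
  have hlt : m < nextInBlock V m := lt_nextInBlock hm h
  have hne : nextInBlock V m ≠ fmin V := fun e => absurd (fmin_le hm) (by omega)
  rw [prevInBlock, if_neg hne]
  refine fmax_eq_of_forall_le (mem_filter.mpr ⟨hm, hlt⟩) fun x hx => ?_
  have hx' := mem_filter.mp hx
  by_contra hc
  exact absurd (nextInBlock_le (m := m) hx'.1 (by omega)) (by omega)

lemma nextInBlock_prevInBlock (hm : m ∈ V) : nextInBlock V (prevInBlock V m) = m := by
  by_cases h : m = fmin V
  · subst h; rw [prevInBlock_fmin, nextInBlock_fmax]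
  have hlt : prevInBlock V m < m := prevInBlock_lt hm h
  have hne : prevInBlock V m ≠ fmax V := fun e => absurd (le_fmax hm) (by omega)
  rw [nextInBlock, if_neg hne]
  refine fmin_eq_of_forall_le (mem_filter.mpr ⟨hm, hlt⟩) fun x hx => ?_
  have hx' := mem_filter.mp hx
  by_contra hc
  exact absurd (le_prevInBlock (m := m) hx'.1 (by omega)) (by omega)

lemma nextInBlock_eq_iff {y : ℕ} (hm : m ∈ V) (hy : y ∈ V) :
    nextInBlock V m = y ↔ m = prevInBlock V y := by
  constructor
  · rintro rfl; exact (prevInBlock_nextInBlock hm).symm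
  · rintro rfl; exact nextInBlock_prevInBlock hy

/-- Rotating a cycle preserves crossings, up to moving the last point to the front. -/
lemma nextInBlock_crossing {a b c d : ℕ} (ha : a ∈ V) (hb : b ∈ V) (hc : c ∈ V) (hd : d ∈ V)
    (h₁ : a < b) (h₂ : b < c) (h₃ : c < d) :
    (nextInBlock V a < nextInBlock V b ∧ nextInBlock V b < nextInBlock V c ∧
        nextInBlock V c < nextInBlock V d) ∨
      (nextInBlock V d < nextInBlock V a ∧ nextInBlock V a < nextInBlock V b ∧
        nextInBlock V b < nextInBlock V c) := by
  have hd_le := le_fmax hd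
  have la := lt_nextInBlock ha (by omega)
  have lb := lt_nextInBlock hb (by omega)
  have lc := lt_nextInBlock hc (by omega)
  have l1 : nextInBlock V a ≤ b := nextInBlock_le hb h₁
  have l2 : nextInBlock V b ≤ c := nextInBlock_le hc h₂
  have l3 : nextInBlock V c ≤ d := nextInBlock_le hd h₃
  by_cases hdmax : d = fmax V
  · have : nextInBlock V d = fmin V := hdmax ▸ nextInBlock_fmax V
    have := fmin_le ha
    right; omega
  · have := lt_nextInBlock hd hdmax
    left; omega

end Cycle

section Partition

variable {F : Finset ℕ} {α : Finset (Finset ℕ)} {V : Finset ℕ} {m : ℕ}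

lemma IsPartitionOfSet.eq_of_mem_of_mem (hp : IsPartitionOfSet F α) {W : Finset ℕ}
    (hV : V ∈ α) (hW : W ∈ α) (hmV : m ∈ V) (hmW : m ∈ W) : V = W := by
  by_contra h
  have hm : m ∈ V ∩ W := mem_inter.mpr ⟨hmV, hmW⟩
  simp [hp.2.2.2 V hV W hW h] at hm

lemma IsNCPartition.nonempty {n : ℕ} (hα : IsNCPartition n α) (hV : V ∈ α) : V.Nonempty :=
  hα.1.1 V hV

lemma IsNCPartition.subset {n : ℕ} (hα : IsNCPartition n α) (hV : V ∈ α) :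
    V ⊆ Finset.Icc 1 n :=
  hα.1.2.1 V hV

lemma IsNCPartition.exists_mem {n : ℕ} (hα : IsNCPartition n α) (hm : m ∈ Finset.Icc 1 n) :
    ∃ V ∈ α, m ∈ V :=
  hα.1.2.2.1 m hm

lemma IsNCPartition.eq_of_mem_of_mem {n : ℕ} (hα : IsNCPartition n α) {W : Finset ℕ}
    (hV : V ∈ α) (hW : W ∈ α) (hmV : m ∈ V) (hmW : m ∈ W) : V = W :=
  IsPartitionOfSet.eq_of_mem_of_mem hα.1 hV hW hmV hmW

lemma blockOf_eq (hp : IsPartitionOfSet F α) (hV : V ∈ α) (hm : m ∈ V) : blockOf α m = V := by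
  have : α.filter (fun W => m ∈ W) = {V} := by
    ext W
    simp only [mem_filter, mem_singleton]
    exact ⟨fun ⟨hW, hmW⟩ => hp.eq_of_mem_of_mem hW hV hmW hm, by rintro rfl; exact ⟨hV, hm⟩⟩
  rw [blockOf, this, sup_singleton, id]

lemma permOf_eq (hp : IsPartitionOfSet F α) (hV : V ∈ α) (hm : m ∈ V) :
    permOf α m = nextInBlock V m := by
  rw [permOf, blockOf_eq hp hV hm, if_pos hm]

lemma permOfInv_eq (hp : IsPartitionOfSet F α) (hV : V ∈ α) (hm : m ∈ V) :
    permOfInv α m = prevInBlock V m := by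
  rw [permOfInv, blockOf_eq hp hV hm, if_pos hm]

lemma permOf_mem (hp : IsPartitionOfSet F α) (hV : V ∈ α) (hm : m ∈ V) : permOf α m ∈ V := by
  rw [permOf_eq hp hV hm]; exact nextInBlock_mem hm

lemma permOfInv_mem (hp : IsPartitionOfSet F α) (hV : V ∈ α) (hm : m ∈ V) :
    permOfInv α m ∈ V := by
  rw [permOfInv_eq hp hV hm]; exact prevInBlock_mem hm

lemma permOfInv_permOf (hp : IsPartitionOfSet F α) (hV : V ∈ α) (hm : m ∈ V) :
    permOfInv α (permOf α m) = m := by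
  rw [permOf_eq hp hV hm, permOfInv_eq hp hV (nextInBlock_mem hm), prevInBlock_nextInBlock hm]

lemma permOf_permOfInv (hp : IsPartitionOfSet F α) (hV : V ∈ α) (hm : m ∈ V) :
    permOf α (permOfInv α m) = m := by
  rw [permOfInv_eq hp hV hm, permOf_eq hp hV (prevInBlock_mem hm), nextInBlock_prevInBlock hm]

lemma permOf_injOn (hp : IsPartitionOfSet F α) : Set.InjOn (permOf α) F := by
  intro x hx y hy h
  obtain ⟨V, hV, hxV⟩ := hp.2.2.1 x hx
  obtain ⟨W, hW, hyW⟩ := hp.2.2.1 y hy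
  rw [← permOfInv_permOf hp hV hxV, ← permOfInv_permOf hp hW hyW, h]

lemma image_permOf_image_permOfInv (hp : IsPartitionOfSet F α) {W U : Finset ℕ} (hW : W ∈ α)
    (hUW : U ⊆ W) : (U.image (permOfInv α)).image (permOf α) = U := by
  rw [image_image]
  exact (image_congr fun x hx => permOf_permOfInv hp hW (hUW hx)).trans image_id

lemma image_permOfInv_image_permOf (hp : IsPartitionOfSet F α) {W U : Finset ℕ} (hW : W ∈ α)
    (hUW : U ⊆ W) : (U.image (permOf α)).image (permOfInv α) = U := by
  rw [image_image]
  exact (image_congr fun x hx => permOfInv_permOf hp hW (hUW hx)).trans image_id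

lemma image_permOfInv_subset (hp : IsPartitionOfSet F α) {W U : Finset ℕ} (hW : W ∈ α)
    (hUW : U ⊆ W) : U.image (permOfInv α) ⊆ W := fun _ hx => by
  obtain ⟨u, hu, rfl⟩ := mem_image.mp hx
  exact permOfInv_mem hp hW (hUW hu)

lemma image_permOf_subset (hp : IsPartitionOfSet F α) {W U : Finset ℕ} (hW : W ∈ α)
    (hUW : U ⊆ W) : U.image (permOf α) ⊆ W := fun _ hx => by
  obtain ⟨u, hu, rfl⟩ := mem_image.mp hx
  exact permOf_mem hp hW (hUW hu)

lemma mem_mapPart {g : ℕ → ℕ} : V ∈ mapPart g α ↔ ∃ U ∈ α, U.image g = V := by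
  simp [mapPart]

lemma mapPart_isPartitionOfSet (hp : IsPartitionOfSet F α) {g g' : ℕ → ℕ}
    (hg : ∀ x ∈ F, g x ∈ F) (hg' : ∀ x ∈ F, g' x ∈ F)
    (hg'g : ∀ x ∈ F, g' (g x) = x) (hgg' : ∀ x ∈ F, g (g' x) = x) :
    IsPartitionOfSet F (mapPart g α) := by
  refine ⟨?_, ?_, fun m hm => ?_, ?_⟩
  · intro V hV
    obtain ⟨U, hU, rfl⟩ := mem_mapPart.mp hV
    exact (hp.1 U hU).image g
  · intro V hV
    obtain ⟨U, hU, rfl⟩ := mem_mapPart.mp hV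
    intro x hx
    obtain ⟨u, hu, rfl⟩ := mem_image.mp hx
    exact hg u (hp.2.1 U hU hu)
  · obtain ⟨U, hU, hmem⟩ := hp.2.2.1 (g' m) (hg' m hm)
    exact ⟨U.image g, mem_mapPart.mpr ⟨U, hU, rfl⟩, mem_image.mpr ⟨g' m, hmem, hgg' m hm⟩⟩
  · intro V hV W hW hne
    obtain ⟨U₁, hU₁, rfl⟩ := mem_mapPart.mp hV
    obtain ⟨U₂, hU₂, rfl⟩ := mem_mapPart.mp hW
    refine eq_empty_iff_forall_notMem.mpr fun x hx => hne ?_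
    obtain ⟨u₁, hu₁, rfl⟩ := mem_image.mp (mem_inter.mp hx).1
    obtain ⟨u₂, hu₂, he⟩ := mem_image.mp (mem_inter.mp hx).2
    have hu : u₂ = u₁ := by
      rw [← hg'g u₂ (hp.2.1 U₂ hU₂ hu₂), he, hg'g u₁ (hp.2.1 U₁ hU₁ hu₁)]
    rw [hp.eq_of_mem_of_mem hU₁ hU₂ hu₁ (hu ▸ hu₂)]

lemma mapPart_permOfInv_isPartitionOfSet (hp : IsPartitionOfSet F α) {γ : Finset (Finset ℕ)}
    (hγ : IsPartitionOfSet F γ) : IsPartitionOfSet F (mapPart (permOfInv α) γ) := by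
  have hblock : ∀ x ∈ F, ∃ W ∈ α, x ∈ W := hp.2.2.1
  refine mapPart_isPartitionOfSet hγ (g' := permOf α) (fun x hx => ?_) (fun x hx => ?_)
    (fun x hx => ?_) (fun x hx => ?_) <;> obtain ⟨W, hW, hxW⟩ := hblock x hx
  exacts [hp.2.1 W hW (permOfInv_mem hp hW hxW), hp.2.1 W hW (permOf_mem hp hW hxW),
    permOf_permOfInv hp hW hxW, permOfInv_permOf hp hW hxW]

lemma refines_mapPart_permOfInv (hp : IsPartitionOfSet F α) {γ : Finset (Finset ℕ)}
    (hγα : Refines γ α) : Refines (mapPart (permOfInv α) γ) α := by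
  intro V hV
  obtain ⟨U, hU, rfl⟩ := mem_mapPart.mp hV
  obtain ⟨W, hW, hUW⟩ := hγα U hU
  refine ⟨W, hW, fun x hx => ?_⟩
  obtain ⟨u, hu, rfl⟩ := mem_image.mp hx
  exact permOfInv_mem hp hW (hUW hu)

/-- Shifting a refinement `γ` of a non-crossing partition `α` backwards along the cycles of `α`
keeps it non-crossing: inside one block of `α`, a crossing of the shifted blocks is rotated
forward into a crossing of `γ`. -/
lemma mapPart_permOfInv_not_isCrossing (hp : IsPartitionOfSet F α) (hα : ¬ IsCrossing α)
    {γ : Finset (Finset ℕ)} (hγ : ¬ IsCrossing γ) (hγα : Refines γ α) :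
    ¬ IsCrossing (mapPart (permOfInv α) γ) := by
  rintro ⟨V₁, hV₁, V₂, hV₂, hne, a, ha, b, hb, c, hc, d, hd, h₁, h₂, h₃⟩
  obtain ⟨U₁, hU₁, rfl⟩ := mem_mapPart.mp hV₁
  obtain ⟨U₂, hU₂, rfl⟩ := mem_mapPart.mp hV₂
  obtain ⟨W₁, hW₁, hUW₁⟩ := hγα U₁ hU₁
  obtain ⟨W₂, hW₂, hUW₂⟩ := hγα U₂ hU₂
  have hmem : ∀ {U W : Finset ℕ}, W ∈ α → U ⊆ W → ∀ x ∈ U.image (permOfInv α),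
      x ∈ W ∧ nextInBlock W x ∈ U := by
    intro U W hW hUW x hx
    obtain ⟨u, hu, rfl⟩ := mem_image.mp hx
    refine ⟨permOfInv_mem hp hW (hUW hu), ?_⟩
    rwa [← permOf_eq hp hW (permOfInv_mem hp hW (hUW hu)), permOf_permOfInv hp hW (hUW hu)]
  obtain ⟨haW, ha'⟩ := hmem hW₁ hUW₁ a ha
  obtain ⟨hbW, hb'⟩ := hmem hW₂ hUW₂ b hb
  obtain ⟨hcW, hc'⟩ := hmem hW₁ hUW₁ c hc
  obtain ⟨hdW, hd'⟩ := hmem hW₂ hUW₂ d hd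
  by_cases hW : W₁ = W₂
  · subst hW
    have hUne : U₁ ≠ U₂ := fun e => hne (e ▸ rfl)
    rcases nextInBlock_crossing haW hbW hcW hdW h₁ h₂ h₃ with ⟨k₁, k₂, k₃⟩ | ⟨k₁, k₂, k₃⟩
    · exact hγ ⟨U₁, hU₁, U₂, hU₂, hUne, _, ha', _, hb', _, hc', _, hd', k₁, k₂, k₃⟩
    · exact hγ ⟨U₂, hU₂, U₁, hU₁, hUne.symm, _, hd', _, ha', _, hb', _, hc', k₁, k₂, k₃⟩
  · exact hα ⟨W₁, hW₁, W₂, hW₂, hW, a, haW, b, hbW, c, hcW, d, hdW, h₁, h₂, h₃⟩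

end Partition

section Connectivity

def Conn (π : Finset (Finset ℕ)) : ℕ → ℕ → Prop :=
  Relation.EqvGen (fun a b => ∃ A ∈ π, a ∈ A ∧ b ∈ A)

variable {π : Finset (Finset ℕ)} {x y z : ℕ}

lemma Conn.refl (π : Finset (Finset ℕ)) (x : ℕ) : Conn π x x := Relation.EqvGen.refl x

lemma Conn.symm (h : Conn π x y) : Conn π y x := Relation.EqvGen.symm _ _ h

lemma Conn.trans (h₁ : Conn π x y) (h₂ : Conn π y z) : Conn π x z :=
  Relation.EqvGen.trans _ _ _ h₁ h₂

lemma Conn.of_mem {A : Finset ℕ} (hA : A ∈ π) (hx : x ∈ A) (hy : y ∈ A) : Conn π x y :=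
  Relation.EqvGen.rel _ _ ⟨A, hA, hx, hy⟩

lemma Conn.iff_of_forall_mem (S : ℕ → Prop) (hS : ∀ A ∈ π, ∀ x ∈ A, ∀ y ∈ A, S x → S y)
    (h : Conn π x y) : S x ↔ S y := by
  induction h with
  | rel a b hab =>
    obtain ⟨A, hA, ha, hb⟩ := hab
    exact ⟨hS A hA a ha b hb, hS A hA b hb a ha⟩
  | refl => exact Iff.rfl
  | symm _ _ _ ih => exact ih.symm
  | trans _ _ _ _ _ ih₁ ih₂ => exact ih₁.trans ih₂

lemma Conn.exists_block_straddling (h : Conn π x y) {b : ℕ} (hb₁ : min x y < b)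
    (hb₂ : b < max x y) (hxb : ¬ Conn π x b) :
    ∃ A ∈ π, ∃ u ∈ A, ∃ v ∈ A, u < b ∧ b < v ∧ Conn π x u := by
  induction h generalizing b with
  | rel a c hac =>
    obtain ⟨A, hA, ha, hc⟩ := hac
    rcases le_total a c with hle | hle
    · exact ⟨A, hA, a, ha, c, hc, by omega, by omega, Conn.refl π a⟩
    · exact ⟨A, hA, c, hc, a, ha, by omega, by omega, Conn.of_mem hA ha hc⟩
  | refl => omega
  | symm a c hac ih =>
    obtain ⟨A, hA, u, hu, v, hv, hub, hbv, hcu⟩ :=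
      ih (by omega) (by omega) fun hcb => hxb ((Conn.symm hac).trans hcb)
    exact ⟨A, hA, u, hu, v, hv, hub, hbv, (Conn.symm hac).trans hcu⟩
  | trans a c d hac _ ih₁ ih₂ =>
    by_cases hb : min a c < b ∧ b < max a c
    · exact ih₁ hb.1 hb.2 hxb
    · have hbc : b ≠ c := fun e => hxb (e ▸ hac)
      obtain ⟨A, hA, u, hu, v, hv, hub, hbv, hcu⟩ :=
        ih₂ (by omega) (by omega) fun hcb => hxb (Conn.trans hac hcb)
      exact ⟨A, hA, u, hu, v, hv, hub, hbv, Conn.trans hac hcu⟩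

end Connectivity

section Linked

variable {n : ℕ} {π : Finset (Finset ℕ)} {A B C : Finset ℕ} {m : ℕ}

lemma IsNCL.nonempty (hπ : IsNCL n π) (hA : A ∈ π) : A.Nonempty := hπ.1.1 A hA

lemma IsNCL.subset (hπ : IsNCL n π) (hA : A ∈ π) : A ⊆ Finset.Icc 1 n := hπ.1.2.1 A hA

lemma IsNCL.exists_mem (hπ : IsNCL n π) (hm : m ∈ Finset.Icc 1 n) : ∃ A ∈ π, m ∈ A :=
  hπ.1.2.2.1 m hm

lemma IsNCL.shared_point (hπ : IsNCL n π) (hA : A ∈ π) (hB : B ∈ π) (hne : A ≠ B)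
    (hmA : m ∈ A) (hmB : m ∈ B) :
    (m = fmin A ∨ m = fmin B) ∧ fmin A ≠ fmin B ∧ 2 ≤ A.card ∧ 2 ≤ B.card := by
  rcases hπ.1.2.2.2 A hA B hB hne with h | h
  · have hm : m ∈ A ∩ B := mem_inter.mpr ⟨hmA, hmB⟩
    simp [h] at hm
  · exact ⟨h.2.2.2.2 m (mem_inter.mpr ⟨hmA, hmB⟩), h.2.2.2.1, h.1, h.2.1⟩

lemma IsNCL.fmin_lt_of_shared_fmin (hπ : IsNCL n π) (hA : A ∈ π) (hB : B ∈ π) (hne : A ≠ B)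
    (hmA : fmin A ∈ B) : fmin B < fmin A := by
  obtain ⟨h, hne', -⟩ := hπ.shared_point hA hB hne (fmin_mem (hπ.nonempty hA)) hmA
  have := fmin_le hmA
  omega

lemma IsNCL.eq_of_mem_of_mem_of_mem (hπ : IsNCL n π) (hA : A ∈ π) (hB : B ∈ π) (hC : C ∈ π)
    (hmA : m ∈ A) (hmB : m ∈ B) (hmC : m ∈ C) (hAB : A ≠ B) (hAC : A ≠ C) : B = C := by
  by_contra hBC
  obtain ⟨e₁, f₁, -⟩ := hπ.shared_point hA hB hAB hmA hmB
  obtain ⟨e₂, f₂, -⟩ := hπ.shared_point hA hC hAC hmA hmC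
  obtain ⟨e₃, f₃, -⟩ := hπ.shared_point hB hC hBC hmB hmC
  omega

lemma SinglyCovered.eq_of_mem (h : SinglyCovered π m) (hA : A ∈ π) (hB : B ∈ π)
    (hmA : m ∈ A) (hmB : m ∈ B) : A = B :=
  card_le_one.mp h.le A (mem_filter.mpr ⟨hA, hmA⟩) B (mem_filter.mpr ⟨hB, hmB⟩)

lemma DoublyCovered.not_singlyCovered (h : DoublyCovered π m) : ¬ SinglyCovered π m := by
  unfold DoublyCovered at h; unfold SinglyCovered; omega

lemma DoublyCovered.exists_pair (h : DoublyCovered π m) :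
    ∃ A ∈ π, ∃ B ∈ π, A ≠ B ∧ m ∈ A ∧ m ∈ B := by
  obtain ⟨A, B, hne, hAB⟩ := card_eq_two.mp h
  have hA : A ∈ π.filter (fun A => m ∈ A) := by rw [hAB]; simp
  have hB : B ∈ π.filter (fun A => m ∈ A) := by rw [hAB]; simp
  rw [mem_filter] at hA hB
  exact ⟨A, hA.1, B, hB.1, hne, hA.2, hB.2⟩

lemma IsNCL.singlyCovered_or_doublyCovered (hπ : IsNCL n π) (hm : m ∈ Finset.Icc 1 n) :
    SinglyCovered π m ∨ DoublyCovered π m := by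
  have h₁ : 1 ≤ coverCount π m := by
    obtain ⟨A, hA, hmA⟩ := hπ.exists_mem hm
    exact card_pos.mpr ⟨A, mem_filter.mpr ⟨hA, hmA⟩⟩
  have h₂ : coverCount π m ≤ 2 := by
    by_contra hc
    obtain ⟨A, hA, B, hB, C, hC, hAB, hAC, hBC⟩ := two_lt_card.mp (not_le.mp hc)
    rw [mem_filter] at hA hB hC
    exact hBC (hπ.eq_of_mem_of_mem_of_mem hA.1 hB.1 hC.1 hA.2 hB.2 hC.2 hAB hAC)
  unfold SinglyCovered DoublyCovered
  omega

lemma IsNCL.doublyCovered_of_not_singlyCovered (hπ : IsNCL n π) (hA : A ∈ π)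
    (h : ¬ SinglyCovered π (fmin A)) : DoublyCovered π (fmin A) :=
  (hπ.singlyCovered_or_doublyCovered (hπ.subset hA (fmin_mem (hπ.nonempty hA)))).resolve_left h

lemma IsNCL.doublyCovered_of_mem (hπ : IsNCL n π) (hA : A ∈ π) (hB : B ∈ π) (hne : A ≠ B)
    (hmA : m ∈ A) (hmB : m ∈ B) : DoublyCovered π m :=
  (hπ.singlyCovered_or_doublyCovered (hπ.subset hA hmA)).resolve_left
    fun h => hne (h.eq_of_mem hA hB hmA hmB)

end Linked

section Components

variable {n : ℕ} {π : Finset (Finset ℕ)} {A : Finset ℕ} {m x y : ℕ}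

noncomputable def component (n : ℕ) (π : Finset (Finset ℕ)) (m : ℕ) : Finset ℕ :=
  (Finset.Icc 1 n).filter (Conn π m)

lemma mem_component : x ∈ component n π m ↔ x ∈ Finset.Icc 1 n ∧ Conn π m x := mem_filter

lemma self_mem_component (hm : m ∈ Finset.Icc 1 n) : m ∈ component n π m :=
  mem_component.mpr ⟨hm, Conn.refl π m⟩

lemma component_eq_of_conn (h : Conn π m x) : component n π m = component n π x := by
  ext y
  simp only [mem_component]
  exact and_congr_right fun _ => ⟨fun h' => h.symm.trans h', fun h' => h.trans h'⟩

lemma conn_of_mem_component (hx : x ∈ component n π m) (hy : y ∈ component n π m) :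
    Conn π x y :=
  (mem_component.mp hx).2.symm.trans (mem_component.mp hy).2

lemma IsNCL.sup_eq_Icc (hπ : IsNCL n π) : π.sup id = Finset.Icc 1 n := by
  ext x
  simp only [mem_sup, id]
  exact ⟨fun ⟨A, hA, hx⟩ => hπ.subset hA hx, hπ.exists_mem⟩

lemma IsNCL.genPart_eq (hπ : IsNCL n π) :
    genPart π = (Finset.Icc 1 n).image (component n π) := by
  rw [genPart, hπ.sup_eq_Icc]; rfl

lemma IsNCL.mem_genPart (hπ : IsNCL n π) {W : Finset ℕ} :
    W ∈ genPart π ↔ ∃ m ∈ Finset.Icc 1 n, component n π m = W := by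
  rw [hπ.genPart_eq, mem_image]

lemma IsNCL.component_mem_genPart (hπ : IsNCL n π) (hm : m ∈ Finset.Icc 1 n) :
    component n π m ∈ genPart π :=
  hπ.mem_genPart.mpr ⟨m, hm, rfl⟩

lemma IsNCL.subset_component (hπ : IsNCL n π) (hA : A ∈ π) (ha : m ∈ A) :
    A ⊆ component n π m :=
  fun _ hx => mem_component.mpr ⟨hπ.subset hA hx, Conn.of_mem hA ha hx⟩

lemma IsNCL.inside_chord_of_conn (hπ : IsNCL n π) (hA : A ∈ π) {u v : ℕ} (hu : u ∈ A)
    (hv : v ∈ A) (hxy : Conn π x y) (hx : u < x ∧ x < v ∧ ¬ Conn π u x) :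
    u < y ∧ y < v ∧ ¬ Conn π u y := by
  refine (hxy.iff_of_forall_mem (fun z => u < z ∧ z < v ∧ ¬ Conn π u z) ?_).mp hx
  rintro C hC p hp q hq ⟨h₁, h₂, h₃⟩
  have hCA : C ≠ A := fun e => h₃ (Conn.of_mem hA hu (e ▸ hp))
  have hq₃ : ¬ Conn π u q := fun hc => h₃ (hc.trans (Conn.of_mem hC hq hp))
  refine ⟨?_, ?_, hq₃⟩
  · rcases lt_trichotomy q u with h | rfl | h
    · exact (hπ.2 ⟨C, hC, A, hA, hCA, q, hq, u, hu, p, hp, v, hv, h, h₁, h₂⟩).elim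
    · exact (hq₃ (Conn.refl π q)).elim
    · exact h
  · rcases lt_trichotomy q v with h | rfl | h
    · exact h
    · exact (hq₃ (Conn.of_mem hA hu hv)).elim
    · exact (hπ.2 ⟨A, hA, C, hC, hCA.symm, u, hu, p, hp, v, hv, q, hq, h₁, h₂, h⟩).elim

lemma IsNCL.genPart_isPartitionOfSet (hπ : IsNCL n π) :
    IsPartitionOfSet (Finset.Icc 1 n) (genPart π) := by
  simp only [IsPartitionOfSet, hπ.mem_genPart]
  refine ⟨?_, ?_, fun m hm => ⟨_, ⟨m, hm, rfl⟩, self_mem_component hm⟩, ?_⟩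
  · rintro _ ⟨m, hm, rfl⟩
    exact ⟨m, self_mem_component hm⟩
  · rintro _ ⟨m, hm, rfl⟩
    exact filter_subset _ _
  · rintro _ ⟨a, ha, rfl⟩ _ ⟨b, hb, rfl⟩ hne
    refine eq_empty_iff_forall_notMem.mpr fun x hx => hne ?_
    rw [mem_inter, mem_component, mem_component] at hx
    exact component_eq_of_conn (hx.1.2.trans hx.2.2.symm)

lemma IsNCL.genPart_not_isCrossing (hπ : IsNCL n π) : ¬ IsCrossing (genPart π) := by
  rintro ⟨X, hX, Y, hY, hXY, a, haX, b, hbY, c, hcX, d, hdY, h₁, h₂, h₃⟩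
  obtain ⟨mx, -, rfl⟩ := hπ.mem_genPart.mp hX
  obtain ⟨my, -, rfl⟩ := hπ.mem_genPart.mp hY
  have hac := conn_of_mem_component haX hcX
  have hbd := conn_of_mem_component hbY hdY
  have hab : ¬ Conn π a b := fun h => hXY <| component_eq_of_conn <|
    (mem_component.mp haX).2.trans (h.trans (mem_component.mp hbY).2.symm)
  have hbc : ¬ Conn π b c := fun h => hab (hac.trans h.symm)
  obtain ⟨A, hA, u, hu, v, hv, hub, hbv, hau⟩ :=
    hac.exists_block_straddling (b := b) (by omega) (by omega) hab
  obtain ⟨B, hB, s, hs, t, ht, hsc, hct, hbs⟩ :=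
    hbd.exists_block_straddling (b := c) (by omega) (by omega) hbc
  have hub' : ¬ Conn π u b := fun h => hab (hau.trans h)
  -- `s` is trapped inside the chord `u v` of `A`, and `u` inside the chord `s t` of `B`
  have hs' := hπ.inside_chord_of_conn hA hu hv hbs ⟨hub, hbv, hub'⟩
  have hu' := hπ.inside_chord_of_conn hB hs ht (hac.symm.trans hau)
    ⟨hsc, hct, fun h => hbc (hbs.trans h)⟩
  omega

lemma IsNCL.genPart_isNCPartition (hπ : IsNCL n π) : IsNCPartition n (genPart π) :=
  ⟨hπ.genPart_isPartitionOfSet, hπ.genPart_not_isCrossing⟩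

end Components

section ComponentMinimum

variable {n : ℕ} {π : Finset (Finset ℕ)} {A : Finset ℕ} {x : ℕ}

/-- The blocks through `min A` avoid the gap below the second smallest element of `A`, and any
other block meeting the gap lies inside it. -/
lemma IsNCL.fmin_erase_le_of_conn (hπ : IsNCL n π) (hA : A ∈ π)
    (h₂ : (A.erase (fmin A)).Nonempty) (hconn : Conn π (fmin A) x) (hx : fmin A < x) :
    fmin (A.erase (fmin A)) ≤ x := by
  set m := fmin A
  set a₂ := fmin (A.erase m)
  have hmA : m ∈ A := fmin_mem (hπ.nonempty hA)
  have ha₂A : a₂ ∈ A := fmin_erase_mem h₂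
  have hma₂ : m < a₂ := fmin_lt_fmin_erase h₂
  have hA_gap : ∀ z ∈ A, z = m ∨ a₂ ≤ z := fun z hz =>
    or_iff_not_imp_left.mpr fun h => fmin_le (mem_erase.mpr ⟨h, hz⟩)
  have hgap : ∀ D ∈ π, ∀ a ∈ D, ∀ b ∈ D, m < a ∧ a < a₂ → m < b ∧ b < a₂ := by
    rintro D hD a ha b hb ⟨ha₁, ha₂⟩
    have hDA : D ≠ A := by rintro rfl; rcases hA_gap a ha with h | h <;> omega
    have hmD : m ∉ D := fun hmD =>
      hπ.2 ⟨D, hD, A, hA, hDA, fmin D, fmin_mem ⟨a, ha⟩, m, hmA, a, ha, a₂, ha₂A,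
        hπ.fmin_lt_of_shared_fmin hA hD hDA.symm hmD, ha₁, ha₂⟩
    refine ⟨?_, ?_⟩
    · rcases lt_trichotomy b m with h | rfl | h
      · exact (hπ.2 ⟨D, hD, A, hA, hDA, b, hb, m, hmA, a, ha, a₂, ha₂A, h, ha₁, ha₂⟩).elim
      · exact (hmD hb).elim
      · exact h
    · rcases lt_trichotomy b a₂ with h | rfl | h
      · exact h
      · rcases (hπ.shared_point hD hA hDA hb ha₂A).1 with h | h
        · have := fmin_le ha; omega
        · omega
      · exact (hπ.2 ⟨A, hA, D, hD, hDA.symm, m, hmA, a, ha, a₂, ha₂A, b, hb, ha₁, ha₂, h⟩).elim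
  by_contra hc
  have := (hconn.iff_of_forall_mem (fun z => m < z ∧ z < a₂) hgap).mpr ⟨hx, by omega⟩
  omega

lemma IsNCL.nextInBlock_component_fmin (hπ : IsNCL n π) (hA : A ∈ π)
    (h₂ : (A.erase (fmin A)).Nonempty) :
    nextInBlock (component n π (fmin A)) (fmin A) = fmin (A.erase (fmin A)) := by
  have hsub := hπ.subset_component hA (fmin_mem (hπ.nonempty hA))
  have hm := hsub (fmin_mem (hπ.nonempty hA))
  have ha₂ := hsub (fmin_erase_mem h₂)
  have hlt := fmin_lt_fmin_erase h₂
  have hle := nextInBlock_le ha₂ hlt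
  have hgt := lt_nextInBlock hm (by have := le_fmax ha₂; omega)
  have := hπ.fmin_erase_le_of_conn hA h₂ (mem_component.mp (nextInBlock_mem hm)).2 hgt
  omega

lemma IsNCL.eq_of_conn_of_singleton (hπ : IsNCL n π) (hA : A ∈ π)
    (hs : SinglyCovered π (fmin A)) (hA₁ : A.erase (fmin A) = ∅) (hx : Conn π (fmin A) x) :
    x = fmin A := by
  refine (hx.iff_of_forall_mem (· = fmin A) ?_).mp rfl
  rintro D hD a ha b hb rfl
  have hDA := hs.eq_of_mem hD hA ha (fmin_mem (hπ.nonempty hA))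
  subst hDA
  by_contra hb'
  simpa [hA₁] using mem_erase.mpr ⟨hb', hb⟩

end ComponentMinimum

section Root

variable {n : ℕ} {π : Finset (Finset ℕ)} {A B D E E' : Finset ℕ} {m x y : ℕ}

def ParentBlock (π : Finset (Finset ℕ)) (D E : Finset ℕ) : Prop :=
  E ∈ π ∧ E ≠ D ∧ fmin D ∈ E

lemma IsNCL.parentBlock_unique (hπ : IsNCL n π) (hD : D ∈ π) (h : ParentBlock π D E)
    (h' : ParentBlock π D E') : E = E' :=
  hπ.eq_of_mem_of_mem_of_mem hD h.1 h'.1 (fmin_mem (hπ.nonempty hD)) h.2.2 h'.2.2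
    h.2.1.symm h'.2.1.symm

/-- Following parents from any block of a component leads to the same root. -/
lemma IsNCL.reflTransGen_parentBlock_of_conn (hπ : IsNCL n π) (hs : SinglyCovered π (fmin B))
    (hxy : Conn π x y) (hx : ∀ D ∈ π, x ∈ D → Relation.ReflTransGen (ParentBlock π) D B) :
    ∀ D ∈ π, y ∈ D → Relation.ReflTransGen (ParentBlock π) D B := by
  refine (hxy.iff_of_forall_mem
    (fun z => ∀ D ∈ π, z ∈ D → Relation.ReflTransGen (ParentBlock π) D B) ?_).mp hx
  intro D hD a ha b hb hSa E hE hbE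
  by_cases hED : E = D
  · exact hED ▸ hSa D hD ha
  rcases (hπ.shared_point hD hE (Ne.symm hED) hb hbE).1 with rfl | rfl
  · have hpar : ParentBlock π D E := ⟨hE, hED, hbE⟩
    rcases (hSa D hD ha).cases_head with rfl | ⟨F, hDF, hFB⟩
    · exact (hED (hs.eq_of_mem hE hD hbE hb)).elim
    · rwa [hπ.parentBlock_unique hD hpar hDF]
  · exact .head ⟨hD, Ne.symm hED, hb⟩ (hSa D hD ha)

lemma IsNCL.eq_of_singlyCovered_of_conn (hπ : IsNCL n π) (hA : A ∈ π) (hB : B ∈ π)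
    (hsA : SinglyCovered π (fmin A)) (hsB : SinglyCovered π (fmin B))
    (hconn : Conn π (fmin A) (fmin B)) : A = B := by
  have hroot := hπ.reflTransGen_parentBlock_of_conn hsB hconn.symm
    (fun D hD hBD => hsB.eq_of_mem hD hB hBD (fmin_mem (hπ.nonempty hB)) ▸ .refl)
    A hA (fmin_mem (hπ.nonempty hA))
  rcases hroot.cases_head with h | ⟨E, hAE, -⟩
  · exact h
  · exact (hAE.2.1 (hsA.eq_of_mem hAE.1 hA hAE.2.2 (fmin_mem (hπ.nonempty hA)))).elim

lemma IsNCL.exists_singlyCovered_fmin_component (hπ : IsNCL n π) (hm : m ∈ Finset.Icc 1 n) :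
    ∃ C ∈ π, fmin C = fmin (component n π m) ∧ SinglyCovered π (fmin C) := by
  set W := component n π m
  have hwW : fmin W ∈ W := fmin_mem ⟨m, self_mem_component hm⟩
  have hWeq : W = component n π (fmin W) := component_eq_of_conn (mem_component.mp hwW).2
  have hfmin : ∀ D ∈ π, fmin W ∈ D → fmin D = fmin W := fun D hD hwD => by
    have hDW := hπ.subset_component hD hwD
    rw [← hWeq] at hDW
    exact fmin_eq_of_forall_le hwD fun z hz => fmin_le (hDW hz)
  obtain ⟨C, hC, hwC⟩ := hπ.exists_mem (mem_component.mp hwW).1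
  refine ⟨C, hC, hfmin C hC hwC, ?_⟩
  rw [hfmin C hC hwC]
  refine (hπ.singlyCovered_or_doublyCovered (mem_component.mp hwW).1).resolve_right fun h => ?_
  obtain ⟨D, hD, D', hD', hne, hwD, hwD'⟩ := h.exists_pair
  exact (hπ.shared_point hD hD' hne hwD hwD').2.1 ((hfmin D hD hwD).trans (hfmin D' hD' hwD').symm)

lemma IsNCL.fmin_component_eq (hπ : IsNCL n π) (hA : A ∈ π) (hs : SinglyCovered π (fmin A)) :
    fmin (component n π (fmin A)) = fmin A := by
  have hm := hπ.subset hA (fmin_mem (hπ.nonempty hA))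
  obtain ⟨C, hC, hCW, hsC⟩ := hπ.exists_singlyCovered_fmin_component hm
  have hconn : Conn π (fmin A) (fmin C) :=
    (mem_component.mp (hCW ▸ fmin_mem ⟨_, self_mem_component hm⟩)).2
  rw [← hCW, hπ.eq_of_singlyCovered_of_conn hA hC hs hsC hconn]

end Root

section Unlink

variable {n : ℕ} {π : Finset (Finset ℕ)} {A B : Finset ℕ} {m : ℕ}

noncomputable def unlinkBlock (π : Finset (Finset ℕ)) (A : Finset ℕ) : Finset ℕ :=
  if SinglyCovered π (fmin A) then A else A.erase (fmin A)

lemma unlink_eq_image (π : Finset (Finset ℕ)) : unlink π = π.image (unlinkBlock π) := rfl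

lemma unlinkBlock_of_singlyCovered (h : SinglyCovered π (fmin A)) : unlinkBlock π A = A :=
  if_pos h

lemma unlinkBlock_of_not_singlyCovered (h : ¬ SinglyCovered π (fmin A)) :
    unlinkBlock π A = A.erase (fmin A) :=
  if_neg h

lemma unlinkBlock_subset : unlinkBlock π A ⊆ A := by
  unfold unlinkBlock
  split_ifs
  exacts [Subset.rfl, erase_subset _ _]

lemma mem_unlinkBlock_of_ne_fmin (hmA : m ∈ A) (hm : m ≠ fmin A) : m ∈ unlinkBlock π A := by
  unfold unlinkBlock
  split_ifs
  exacts [hmA, mem_erase.mpr ⟨hm, hmA⟩]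

lemma IsNCL.unlinkBlock_nonempty (hπ : IsNCL n π) (hA : A ∈ π) : (unlinkBlock π A).Nonempty := by
  by_cases hs : SinglyCovered π (fmin A)
  · rw [unlinkBlock_of_singlyCovered hs]; exact hπ.nonempty hA
  rw [unlinkBlock_of_not_singlyCovered hs]
  obtain ⟨B, hB, C, hC, hBC, hmB, hmC⟩ := (hπ.doublyCovered_of_not_singlyCovered hA hs).exists_pair
  have hcard : 2 ≤ A.card := by
    by_cases hAB : A = B
    · exact hAB ▸ (hπ.shared_point hB hC hBC hmB hmC).2.2.1
    · exact (hπ.shared_point hA hB hAB (fmin_mem (hπ.nonempty hA)) hmB).2.2.1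
  rw [← card_pos, card_erase_of_mem (fmin_mem (hπ.nonempty hA))]
  omega

lemma IsNCL.disjoint_unlinkBlock (hπ : IsNCL n π) (hA : A ∈ π) (hB : B ∈ π) (hne : A ≠ B) :
    unlinkBlock π A ∩ unlinkBlock π B = ∅ := by
  refine eq_empty_iff_forall_notMem.mpr fun x hx => ?_
  obtain ⟨hxA, hxB⟩ := mem_inter.mp hx
  have hd := hπ.doublyCovered_of_mem hA hB hne (unlinkBlock_subset hxA) (unlinkBlock_subset hxB)
  rcases (hπ.shared_point hA hB hne (unlinkBlock_subset hxA) (unlinkBlock_subset hxB)).1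
    with rfl | rfl
  · rw [unlinkBlock_of_not_singlyCovered hd.not_singlyCovered] at hxA
    exact (mem_erase.mp hxA).1 rfl
  · rw [unlinkBlock_of_not_singlyCovered hd.not_singlyCovered] at hxB
    exact (mem_erase.mp hxB).1 rfl

lemma IsNCL.exists_mem_unlinkBlock (hπ : IsNCL n π) (hm : m ∈ Finset.Icc 1 n) :
    ∃ A ∈ π, m ∈ unlinkBlock π A := by
  rcases hπ.singlyCovered_or_doublyCovered hm with hs | hd
  · obtain ⟨A, hA, hmA⟩ := hπ.exists_mem hm
    refine ⟨A, hA, ?_⟩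
    by_cases hmin : m = fmin A
    · rw [unlinkBlock_of_singlyCovered (hmin ▸ hs)]; exact hmA
    · exact mem_unlinkBlock_of_ne_fmin hmA hmin
  · obtain ⟨A, hA, B, hB, hne, hmA, hmB⟩ := hd.exists_pair
    obtain ⟨hmin | hmin, hAB, -⟩ := hπ.shared_point hA hB hne hmA hmB
    · exact ⟨B, hB, mem_unlinkBlock_of_ne_fmin hmB (hmin ▸ hAB)⟩
    · exact ⟨A, hA, mem_unlinkBlock_of_ne_fmin hmA (hmin ▸ hAB.symm)⟩

lemma IsNCL.unlink_isPartitionOfSet (hπ : IsNCL n π) :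
    IsPartitionOfSet (Finset.Icc 1 n) (unlink π) := by
  simp only [IsPartitionOfSet, unlink_eq_image, forall_mem_image, exists_mem_image]
  refine ⟨fun A hA => hπ.unlinkBlock_nonempty hA,
    fun A hA => unlinkBlock_subset.trans (hπ.subset hA),
    fun m hm => hπ.exists_mem_unlinkBlock hm, fun A hA B hB hne => ?_⟩
  exact hπ.disjoint_unlinkBlock hA hB fun e => hne (e ▸ rfl)

lemma IsNCL.unlink_not_isCrossing (hπ : IsNCL n π) : ¬ IsCrossing (unlink π) := by
  rintro ⟨U, hU, U', hU', hne, a, ha, b, hb, c, hc, d, hd, h₁, h₂, h₃⟩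
  rw [unlink_eq_image] at hU hU'
  obtain ⟨A, hA, rfl⟩ := mem_image.mp hU
  obtain ⟨B, hB, rfl⟩ := mem_image.mp hU'
  exact hπ.2 ⟨A, hA, B, hB, fun e => hne (e ▸ rfl), a, unlinkBlock_subset ha,
    b, unlinkBlock_subset hb, c, unlinkBlock_subset hc, d, unlinkBlock_subset hd, h₁, h₂, h₃⟩

end Unlink

section CycledUnlinking

variable {n : ℕ} {π : Finset (Finset ℕ)} {C : Finset ℕ}

lemma IsNCL.unlink_refines_genPart (hπ : IsNCL n π) : Refines (unlink π) (genPart π) := by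
  intro U hU
  obtain ⟨A, hA, rfl⟩ := mem_image.mp hU
  obtain ⟨a, ha⟩ := hπ.unlinkBlock_nonempty hA
  exact ⟨_, hπ.component_mem_genPart (hπ.subset hA (unlinkBlock_subset ha)),
    unlinkBlock_subset.trans (hπ.subset_component hA (unlinkBlock_subset ha))⟩

lemma IsNCL.cycUnlink_isNCPartition (hπ : IsNCL n π) : IsNCPartition n (cycUnlink π) :=
  ⟨mapPart_permOfInv_isPartitionOfSet hπ.genPart_isPartitionOfSet hπ.unlink_isPartitionOfSet,
    mapPart_permOfInv_not_isCrossing hπ.genPart_isPartitionOfSet hπ.genPart_not_isCrossing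
      hπ.unlink_not_isCrossing hπ.unlink_refines_genPart⟩

lemma IsNCL.nextInBlock_fmin_component_mem (hπ : IsNCL n π) (hC : C ∈ π)
    (hs : SinglyCovered π (fmin C)) : nextInBlock (component n π (fmin C)) (fmin C) ∈ C := by
  rcases (C.erase (fmin C)).eq_empty_or_nonempty with h₁ | h₂
  · have hm := self_mem_component (π := π) (hπ.subset hC (fmin_mem (hπ.nonempty hC)))
    rw [hπ.eq_of_conn_of_singleton hC hs h₁ (mem_component.mp (nextInBlock_mem hm)).2]
    exact fmin_mem (hπ.nonempty hC)
  · rw [hπ.nextInBlock_component_fmin hC h₂]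
    exact fmin_erase_mem h₂

lemma IsNCL.cycUnlink_LL (hπ : IsNCL n π) : LL (cycUnlink π) (genPart π) := by
  have hp := hπ.genPart_isPartitionOfSet
  refine ⟨refines_mapPart_permOfInv hp hπ.unlink_refines_genPart, fun W hW => ?_⟩
  obtain ⟨m, hm, rfl⟩ := hπ.mem_genPart.mp hW
  obtain ⟨C, hC, hCW, hs⟩ := hπ.exists_singlyCovered_fmin_component hm
  have hCm : fmin C ∈ component n π m := hCW ▸ fmin_mem ⟨m, self_mem_component hm⟩
  rw [component_eq_of_conn (mem_component.mp hCm).2] at hW ⊢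
  rw [hπ.fmin_component_eq hC hs]
  set W := component n π (fmin C)
  have hmin : fmin C ∈ W := self_mem_component (hπ.subset hC (fmin_mem (hπ.nonempty hC)))
  have hCu : C ∈ unlink π := mem_image.mpr ⟨C, hC, unlinkBlock_of_singlyCovered hs⟩
  refine ⟨C.image (permOfInv (genPart π)), mem_mapPart.mpr ⟨C, hCu, rfl⟩, ?_, ?_⟩
  · refine mem_image.mpr ⟨_, hπ.nextInBlock_fmin_component_mem hC hs, ?_⟩
    rw [permOfInv_eq hp hW (nextInBlock_mem hmin), prevInBlock_nextInBlock hmin]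
  · refine mem_image.mpr ⟨fmin C, fmin_mem (hπ.nonempty hC), ?_⟩
    rw [permOfInv_eq hp hW hmin, ← hπ.fmin_component_eq hC hs, prevInBlock_fmin]

end CycledUnlinking

/-- The block of `ψ(α, β)` coming from the block `V` of `α`: `V` is shifted along the cycle of its
`β`-block `W`, and `min V` is put back unless `V` contains `max W` (when `α ≪ β` that block also
contains `min W`). -/
noncomputable def relinkBlock (β : Finset (Finset ℕ)) (V : Finset ℕ) : Finset ℕ :=
  if fmax (blockOf β (fmin V)) ∈ V then V.image (permOf β)
  else insert (fmin V) (V.image (permOf β))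

noncomputable def relink (α β : Finset (Finset ℕ)) : Finset (Finset ℕ) :=
  α.image (relinkBlock β)

section RelinkCycUnlink

variable {n : ℕ} {π : Finset (Finset ℕ)} {A : Finset ℕ}

lemma IsNCL.relinkBlock_image_permOfInv_of_singlyCovered (hπ : IsNCL n π) (hA : A ∈ π)
    (hs : SinglyCovered π (fmin A)) :
    relinkBlock (genPart π) (A.image (permOfInv (genPart π))) = A := by
  have hp := hπ.genPart_isPartitionOfSet
  have hmA := fmin_mem (hπ.nonempty hA)
  set W := component n π (fmin A)
  have hW : W ∈ genPart π := hπ.component_mem_genPart (hπ.subset hA hmA)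
  have hAW : A ⊆ W := hπ.subset_component hA hmA
  have hmax : fmax W ∈ A.image (permOfInv (genPart π)) := mem_image.mpr
    ⟨fmin A, hmA, by rw [permOfInv_eq hp hW (hAW hmA), ← hπ.fmin_component_eq hA hs,
      prevInBlock_fmin]⟩
  rw [relinkBlock, blockOf_eq hp hW (image_permOfInv_subset hp hW hAW (fmin_mem ⟨_, hmax⟩)),
    if_pos hmax, image_permOf_image_permOfInv hp hW hAW]

lemma IsNCL.relinkBlock_image_permOfInv_erase (hπ : IsNCL n π) (hA : A ∈ π)
    (h₂ : (A.erase (fmin A)).Nonempty) :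
    relinkBlock (genPart π) ((A.erase (fmin A)).image (permOfInv (genPart π))) = A := by
  have hp := hπ.genPart_isPartitionOfSet
  have hmA := fmin_mem (hπ.nonempty hA)
  set W := component n π (fmin A)
  have hW : W ∈ genPart π := hπ.component_mem_genPart (hπ.subset hA hmA)
  have hAW : A ⊆ W := hπ.subset_component hA hmA
  have hgt : ∀ u ∈ A.erase (fmin A), fmin A < u := fun u hu =>
    lt_of_le_of_ne (fmin_le (mem_of_mem_erase hu)) (ne_of_mem_erase hu).symm
  have hmV : fmin A ∈ (A.erase (fmin A)).image (permOfInv (genPart π)) := by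
    refine mem_image.mpr ⟨_, fmin_mem h₂, ?_⟩
    rw [permOfInv_eq hp hW (hAW (fmin_erase_mem h₂)), ← hπ.nextInBlock_component_fmin hA h₂,
      prevInBlock_nextInBlock (hAW hmA)]
  have hminV : fmin ((A.erase (fmin A)).image (permOfInv (genPart π))) = fmin A := by
    refine fmin_eq_of_forall_le hmV fun x hx => ?_
    obtain ⟨u, hu, rfl⟩ := mem_image.mp hx
    rw [permOfInv_eq hp hW (hAW (mem_of_mem_erase hu))]
    exact le_prevInBlock (hAW hmA) (hgt u hu)
  have hmaxV : fmax W ∉ (A.erase (fmin A)).image (permOfInv (genPart π)) := by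
    intro h
    obtain ⟨u, hu, he⟩ := mem_image.mp h
    have huW := hAW (mem_of_mem_erase hu)
    rw [permOfInv_eq hp hW huW] at he
    have hu' : u = fmin W := by rw [← nextInBlock_prevInBlock huW, he, nextInBlock_fmax]
    have := fmin_le (hAW hmA)
    have := hgt u hu
    omega
  rw [relinkBlock, hminV, blockOf_eq hp hW (hAW hmA), if_neg hmaxV,
    image_permOf_image_permOfInv hp hW ((erase_subset _ _).trans hAW), insert_erase hmA]

lemma IsNCL.relinkBlock_image_unlinkBlock (hπ : IsNCL n π) (hA : A ∈ π) :
    relinkBlock (genPart π) ((unlinkBlock π A).image (permOfInv (genPart π))) = A := by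
  by_cases hs : SinglyCovered π (fmin A)
  · rw [unlinkBlock_of_singlyCovered hs, hπ.relinkBlock_image_permOfInv_of_singlyCovered hA hs]
  · have h₂ := hπ.unlinkBlock_nonempty hA
    rw [unlinkBlock_of_not_singlyCovered hs] at h₂ ⊢
    exact hπ.relinkBlock_image_permOfInv_erase hA h₂

lemma IsNCL.relink_cycUnlink_genPart (hπ : IsNCL n π) :
    relink (cycUnlink π) (genPart π) = π := by
  rw [relink, cycUnlink, mapPart, unlink_eq_image, image_image, image_image]
  exact (image_congr fun A hA => hπ.relinkBlock_image_unlinkBlock hA).trans image_id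

end RelinkCycUnlink

section Relink

variable {n : ℕ} {α β : Finset (Finset ℕ)} {V W : Finset ℕ} {x : ℕ}

lemma relinkBlock_of_fmax_mem (h : fmax (blockOf β (fmin V)) ∈ V) :
    relinkBlock β V = V.image (permOf β) :=
  if_pos h

lemma relinkBlock_of_fmax_notMem (h : fmax (blockOf β (fmin V)) ∉ V) :
    relinkBlock β V = insert (fmin V) (V.image (permOf β)) :=
  if_neg h

lemma image_permOf_subset_relinkBlock : V.image (permOf β) ⊆ relinkBlock β V := by
  unfold relinkBlock
  split_ifs
  exacts [Subset.rfl, subset_insert _ _]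

lemma mem_relinkBlock (hx : x ∈ relinkBlock β V) :
    x ∈ V.image (permOf β) ∨ (fmax (blockOf β (fmin V)) ∉ V ∧ x = fmin V) := by
  unfold relinkBlock at hx
  split_ifs at hx with h
  · exact Or.inl hx
  · rcases mem_insert.mp hx with rfl | hx
    exacts [Or.inr ⟨h, rfl⟩, Or.inl hx]

lemma blockOf_fmin_mem (hα : IsNCPartition n α) (hβ : IsNCPartition n β) (hαβ : Refines α β)
    (hV : V ∈ α) : blockOf β (fmin V) ∈ β := by
  obtain ⟨W, hW, hVW⟩ := hαβ V hV
  rwa [blockOf_eq hβ.1 hW (hVW (fmin_mem (hα.nonempty hV)))]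

lemma subset_blockOf_fmin (hα : IsNCPartition n α) (hβ : IsNCPartition n β) (hαβ : Refines α β)
    (hV : V ∈ α) : V ⊆ blockOf β (fmin V) := by
  obtain ⟨W, hW, hVW⟩ := hαβ V hV
  rwa [blockOf_eq hβ.1 hW (hVW (fmin_mem (hα.nonempty hV)))]

lemma fmax_mem_iff_fmin_mem (hα : IsNCPartition n α) (hβ : IsNCPartition n β) (hLL : LL α β)
    (hV : V ∈ α) : fmax (blockOf β (fmin V)) ∈ V ↔ fmin (blockOf β (fmin V)) ∈ V := by
  obtain ⟨V₀, hV₀, hmin, hmax⟩ := hLL.2 _ (blockOf_fmin_mem hα hβ hLL.1 hV)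
  exact ⟨fun h => hα.eq_of_mem_of_mem hV₀ hV hmax h ▸ hmin,
    fun h => hα.eq_of_mem_of_mem hV₀ hV hmin h ▸ hmax⟩

lemma image_permOf_subset_blockOf (hα : IsNCPartition n α) (hβ : IsNCPartition n β)
    (hαβ : Refines α β) (hV : V ∈ α) : V.image (permOf β) ⊆ blockOf β (fmin V) :=
  image_permOf_subset hβ.1 (blockOf_fmin_mem hα hβ hαβ hV) (subset_blockOf_fmin hα hβ hαβ hV)

lemma relinkBlock_subset (hα : IsNCPartition n α) (hβ : IsNCPartition n β) (hαβ : Refines α β)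
    (hV : V ∈ α) : relinkBlock β V ⊆ blockOf β (fmin V) := by
  intro x hx
  rcases mem_relinkBlock hx with hx | ⟨-, rfl⟩
  · exact image_permOf_subset_blockOf hα hβ hαβ hV hx
  · exact subset_blockOf_fmin hα hβ hαβ hV (fmin_mem (hα.nonempty hV))

lemma fmin_blockOf_lt (hα : IsNCPartition n α) (hβ : IsNCPartition n β) (hLL : LL α β)
    (hV : V ∈ α) (h : fmax (blockOf β (fmin V)) ∉ V) : fmin (blockOf β (fmin V)) < fmin V := by
  have hmV := fmin_mem (hα.nonempty hV)
  have hle := fmin_le (subset_blockOf_fmin hα hβ hLL.1 hV hmV)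
  have hne : fmin (blockOf β (fmin V)) ≠ fmin V := fun e =>
    h ((fmax_mem_iff_fmin_mem hα hβ hLL hV).mpr (by rw [e]; exact hmV))
  omega

lemma fmin_lt_of_mem_image_permOf (hα : IsNCPartition n α) (hβ : IsNCPartition n β)
    (hαβ : Refines α β) (hV : V ∈ α) (h : fmax (blockOf β (fmin V)) ∉ V)
    (hx : x ∈ V.image (permOf β)) : fmin V < x := by
  obtain ⟨v, hv, rfl⟩ := mem_image.mp hx
  have hvW := subset_blockOf_fmin hα hβ hαβ hV hv
  rw [permOf_eq hβ.1 (blockOf_fmin_mem hα hβ hαβ hV) hvW]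
  have := lt_nextInBlock hvW fun e => h (e ▸ hv)
  have := fmin_le hv
  omega

lemma fmin_notMem_image_permOf (hα : IsNCPartition n α) (hβ : IsNCPartition n β)
    (hαβ : Refines α β) (hV : V ∈ α) (h : fmax (blockOf β (fmin V)) ∉ V) :
    fmin V ∉ V.image (permOf β) := fun h' =>
  (fmin_lt_of_mem_image_permOf hα hβ hαβ hV h h').false

lemma fmin_blockOf_mem_image_permOf (hα : IsNCPartition n α) (hβ : IsNCPartition n β)
    (hαβ : Refines α β) (hV : V ∈ α) (h : fmax (blockOf β (fmin V)) ∈ V) :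
    fmin (blockOf β (fmin V)) ∈ V.image (permOf β) := by
  refine mem_image.mpr ⟨_, h, ?_⟩
  rw [permOf_eq hβ.1 (blockOf_fmin_mem hα hβ hαβ hV) (subset_blockOf_fmin hα hβ hαβ hV h),
    nextInBlock_fmax]

lemma fmin_relinkBlock_of_fmax_notMem (hα : IsNCPartition n α) (hβ : IsNCPartition n β)
    (hαβ : Refines α β) (hV : V ∈ α) (h : fmax (blockOf β (fmin V)) ∉ V) :
    fmin (relinkBlock β V) = fmin V := by
  rw [relinkBlock_of_fmax_notMem h]
  refine fmin_eq_of_forall_le (mem_insert_self _ _) fun x hx => ?_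
  rcases mem_insert.mp hx with rfl | hx
  exacts [le_rfl, (fmin_lt_of_mem_image_permOf hα hβ hαβ hV h hx).le]

lemma fmin_relinkBlock_of_fmax_mem (hα : IsNCPartition n α) (hβ : IsNCPartition n β)
    (hαβ : Refines α β) (hV : V ∈ α) (h : fmax (blockOf β (fmin V)) ∈ V) :
    fmin (relinkBlock β V) = fmin (blockOf β (fmin V)) := by
  rw [relinkBlock_of_fmax_mem h]
  exact fmin_eq_of_forall_le (fmin_blockOf_mem_image_permOf hα hβ hαβ hV h) fun x hx =>
    fmin_le (image_permOf_subset_blockOf hα hβ hαβ hV hx)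

lemma fmin_relinkBlock_le (hα : IsNCPartition n α) (hβ : IsNCPartition n β) (hαβ : Refines α β)
    (hV : V ∈ α) : fmin (relinkBlock β V) ≤ fmin V := by
  by_cases h : fmax (blockOf β (fmin V)) ∈ V
  · rw [fmin_relinkBlock_of_fmax_mem hα hβ hαβ hV h]
    exact fmin_le (subset_blockOf_fmin hα hβ hαβ hV (fmin_mem (hα.nonempty hV)))
  · rw [fmin_relinkBlock_of_fmax_notMem hα hβ hαβ hV h]

lemma exists_mem_image_permOf (hα : IsNCPartition n α) (hβ : IsNCPartition n β) (hW : W ∈ β)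
    {m : ℕ} (hm : m ∈ W) : ∃ V ∈ α, prevInBlock W m ∈ V ∧ m ∈ V.image (permOf β) := by
  have hp := prevInBlock_mem hm
  obtain ⟨V, hV, hpV⟩ := hα.exists_mem (hβ.subset hW hp)
  refine ⟨V, hV, hpV, mem_image.mpr ⟨_, hpV, ?_⟩⟩
  rw [permOf_eq hβ.1 hW hp, nextInBlock_prevInBlock hm]

end Relink

section RelinkLinked

variable {n : ℕ} {α β : Finset (Finset ℕ)} {V V' : Finset ℕ} {x : ℕ}

lemma fmax_notMem_and_fmin_lt_of_mem_image (hα : IsNCPartition n α) (hβ : IsNCPartition n β)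
    (hLL : LL α β) (hV : V ∈ α) (hV' : V' ∈ α) (hne : V ≠ V')
    (h : fmin V ∈ V'.image (permOf β)) :
    fmax (blockOf β (fmin V)) ∉ V ∧ fmin V' < fmin V := by
  have hmV := fmin_mem (hα.nonempty hV)
  have hW := blockOf_fmin_mem hα hβ hLL.1 hV
  set W := blockOf β (fmin V)
  have hW' : blockOf β (fmin V') = W := hβ.eq_of_mem_of_mem (blockOf_fmin_mem hα hβ hLL.1 hV')
    hW (image_permOf_subset_blockOf hα hβ hLL.1 hV' h) (subset_blockOf_fmin hα hβ hLL.1 hV hmV)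
  obtain ⟨v', hv', he⟩ := mem_image.mp h
  have hv'W : v' ∈ W := hW' ▸ subset_blockOf_fmin hα hβ hLL.1 hV' hv'
  rw [permOf_eq hβ.1 hW hv'W, nextInBlock_eq_iff hv'W (subset_blockOf_fmin hα hβ hLL.1 hV hmV)]
    at he
  have hns : fmax W ∉ V := by
    intro hs
    have hfmin : fmin V = fmin W :=
      le_antisymm (fmin_le ((fmax_mem_iff_fmin_mem hα hβ hLL hV).mp hs))
        (fmin_le (subset_blockOf_fmin hα hβ hLL.1 hV hmV))
    rw [hfmin, prevInBlock_fmin] at he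
    exact hne (hα.eq_of_mem_of_mem hV hV' hs (he ▸ hv'))
  have hlt : fmin W < fmin V := fmin_blockOf_lt hα hβ hLL hV hns
  have hprev := prevInBlock_lt (subset_blockOf_fmin hα hβ hLL.1 hV hmV) hlt.ne'
  exact ⟨hns, (fmin_le hv').trans_lt (by rw [he]; exact hprev)⟩

lemma relinkBlock_inter_cases (hα : IsNCPartition n α) (hβ : IsNCPartition n β) (hLL : LL α β)
    (hV : V ∈ α) (hV' : V' ∈ α) (hne : V ≠ V') (hx : x ∈ relinkBlock β V)
    (hx' : x ∈ relinkBlock β V') :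
    (x = fmin V ∧ fmin V' < fmin V) ∨ (x = fmin V' ∧ fmin V < fmin V') := by
  rcases mem_relinkBlock hx with h | ⟨-, rfl⟩ <;> rcases mem_relinkBlock hx' with h' | ⟨-, he⟩
  · exfalso
    obtain ⟨v, hv, rfl⟩ := mem_image.mp h
    obtain ⟨v', hv', he⟩ := mem_image.mp h'
    have := permOf_injOn hβ.1 (hα.subset hV' hv') (hα.subset hV hv) he
    exact hne (hα.eq_of_mem_of_mem hV hV' hv (this ▸ hv'))
  · exact Or.inr ⟨he, (fmax_notMem_and_fmin_lt_of_mem_image hα hβ hLL hV' hV hne.symm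
      (he ▸ h)).2⟩
  · exact Or.inl ⟨rfl, (fmax_notMem_and_fmin_lt_of_mem_image hα hβ hLL hV hV' hne h').2⟩
  · exact (hne (hα.eq_of_mem_of_mem hV hV' (fmin_mem (hα.nonempty hV))
      (he ▸ fmin_mem (hα.nonempty hV')))).elim

lemma two_le_card_relinkBlock (hα : IsNCPartition n α) (hβ : IsNCPartition n β) (hLL : LL α β)
    (hV : V ∈ α) (hW : fmin (blockOf β (fmin V)) < fmax (blockOf β (fmin V))) :
    2 ≤ (relinkBlock β V).card := by
  have hVW := subset_blockOf_fmin hα hβ hLL.1 hV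
  have hcard : (V.image (permOf β)).card = V.card :=
    card_image_of_injOn fun x hx y hy h =>
      permOf_injOn hβ.1 (hα.subset hV hx) (hα.subset hV hy) h
  by_cases h : fmax (blockOf β (fmin V)) ∈ V
  · rw [relinkBlock_of_fmax_mem h, hcard]
    exact one_lt_card.mpr ⟨_, (fmax_mem_iff_fmin_mem hα hβ hLL hV).mp h, _, h, hW.ne⟩
  · rw [relinkBlock_of_fmax_notMem h,
      card_insert_of_notMem (fmin_notMem_image_permOf hα hβ hLL.1 hV h), hcard]
    have := card_pos.mpr (hα.nonempty hV)
    omega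

lemma relinkBlock_linked (hα : IsNCPartition n α) (hβ : IsNCPartition n β) (hLL : LL α β)
    (hV : V ∈ α) (hV' : V' ∈ α) (hne : V ≠ V') (h : fmin V ∈ relinkBlock β V') :
    2 ≤ (relinkBlock β V).card ∧ 2 ≤ (relinkBlock β V').card ∧
      (relinkBlock β V ∩ relinkBlock β V').card = 1 ∧
      fmin (relinkBlock β V) ≠ fmin (relinkBlock β V') ∧
      ∀ x ∈ relinkBlock β V ∩ relinkBlock β V',
        x = fmin (relinkBlock β V) ∨ x = fmin (relinkBlock β V') := by
  have hmV := fmin_mem (hα.nonempty hV)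
  have hmV' := fmin_mem (hα.nonempty hV')
  have himage : fmin V ∈ V'.image (permOf β) := by
    rcases mem_relinkBlock h with h | ⟨-, he⟩
    · exact h
    · exact (hne (hα.eq_of_mem_of_mem hV hV' hmV (he ▸ hmV'))).elim
  obtain ⟨hns, hlt⟩ := fmax_notMem_and_fmin_lt_of_mem_image hα hβ hLL hV hV' hne himage
  have hmin := fmin_relinkBlock_of_fmax_notMem hα hβ hLL.1 hV hns
  have hmin' := fmin_relinkBlock_le hα hβ hLL.1 hV'
  have hmem : fmin V ∈ relinkBlock β V := by
    rw [relinkBlock_of_fmax_notMem hns]; exact mem_insert_self _ _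
  have hinter : relinkBlock β V ∩ relinkBlock β V' = {fmin V} := by
    ext y
    simp only [mem_inter, mem_singleton]
    refine ⟨fun ⟨hy, hy'⟩ => ?_, by rintro rfl; exact ⟨hmem, h⟩⟩
    rcases relinkBlock_inter_cases hα hβ hLL hV hV' hne hy hy' with ⟨rfl, -⟩ | ⟨-, h⟩
    · rfl
    · omega
  have hW' : blockOf β (fmin V') = blockOf β (fmin V) :=
    hβ.eq_of_mem_of_mem (blockOf_fmin_mem hα hβ hLL.1 hV') (blockOf_fmin_mem hα hβ hLL.1 hV)
      (relinkBlock_subset hα hβ hLL.1 hV' h) (subset_blockOf_fmin hα hβ hLL.1 hV hmV)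
  have hW : fmin (blockOf β (fmin V)) < fmax (blockOf β (fmin V)) := by
    have := fmin_le (hW' ▸ subset_blockOf_fmin hα hβ hLL.1 hV' hmV')
    have := le_fmax (subset_blockOf_fmin hα hβ hLL.1 hV hmV)
    omega
  refine ⟨two_le_card_relinkBlock hα hβ hLL hV hW,
    two_le_card_relinkBlock hα hβ hLL hV' (hW' ▸ hW), by rw [hinter, card_singleton],
    by omega, fun x hx => ?_⟩
  rw [hinter, mem_singleton] at hx
  exact Or.inl (hx.trans hmin.symm)

end RelinkLinked

section RelinkNCL

variable {n : ℕ} {α β : Finset (Finset ℕ)} {V W : Finset ℕ} {x : ℕ}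

lemma relink_isLinkedPartitionOfSet (hα : IsNCPartition n α) (hβ : IsNCPartition n β)
    (hLL : LL α β) : IsLinkedPartitionOfSet (Finset.Icc 1 n) (relink α β) := by
  simp only [IsLinkedPartitionOfSet, relink, forall_mem_image, exists_mem_image]
  refine ⟨fun V hV => ((hα.nonempty hV).image _).mono image_permOf_subset_relinkBlock,
    fun V hV => (relinkBlock_subset hα hβ hLL.1 hV).trans
      (hβ.subset (blockOf_fmin_mem hα hβ hLL.1 hV)), fun m hm => ?_, fun V hV V' hV' hne => ?_⟩
  · obtain ⟨W, hW, hmW⟩ := hβ.exists_mem hm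
    obtain ⟨V, hV, -, hmV⟩ := exists_mem_image_permOf hα hβ hW hmW
    exact ⟨V, hV, image_permOf_subset_relinkBlock hmV⟩
  have hVV' : V ≠ V' := fun e => hne (e ▸ rfl)
  rcases (relinkBlock β V ∩ relinkBlock β V').eq_empty_or_nonempty with h | ⟨x, hx⟩
  · exact Or.inl h
  right
  obtain ⟨hx, hx'⟩ := mem_inter.mp hx
  rcases relinkBlock_inter_cases hα hβ hLL hV hV' hVV' hx hx' with ⟨rfl, -⟩ | ⟨rfl, -⟩
  · exact relinkBlock_linked hα hβ hLL hV hV' hVV' hx'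
  · obtain ⟨c₁, c₂, c₃, c₄, c₅⟩ := relinkBlock_linked hα hβ hLL hV' hV hVV'.symm hx
    rw [inter_comm] at c₃ c₅
    exact ⟨c₂, c₁, c₃, c₄.symm, fun y hy => (c₅ y hy).symm⟩

lemma exists_mem_between_prevInBlock (hα : IsNCPartition n α) (hβ : IsNCPartition n β)
    (hV : V ∈ α) (hW : W ∈ β) (hVW : V ⊆ W) (hx : x ∈ relinkBlock β V) (hxne : x ≠ fmin W) :
    ∃ t ∈ V, prevInBlock W x ≤ t ∧ t ≤ x := by
  rcases mem_relinkBlock hx with h | ⟨-, rfl⟩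
  · obtain ⟨v, hv, rfl⟩ := mem_image.mp h
    rw [permOf_eq hβ.1 hW (hVW hv)] at hxne ⊢
    have hvmax : v ≠ fmax W := by rintro rfl; exact hxne (nextInBlock_fmax _)
    exact ⟨v, hv, (prevInBlock_nextInBlock (hVW hv)).le, (lt_nextInBlock (hVW hv) hvmax).le⟩
  · have hmV := fmin_mem (hα.nonempty hV)
    exact ⟨fmin V, hmV, (prevInBlock_lt (hVW hmV) hxne).le, le_rfl⟩

lemma fmax_mem_of_fmin_mem_relinkBlock (hα : IsNCPartition n α) (hβ : IsNCPartition n β)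
    (hLL : LL α β) (hV : V ∈ α) (hx : fmin (blockOf β (fmin V)) ∈ relinkBlock β V) :
    fmax (blockOf β (fmin V)) ∈ V := by
  by_contra hns
  rcases mem_relinkBlock hx with h | ⟨-, he⟩
  · have := fmin_lt_of_mem_image_permOf hα hβ hLL.1 hV hns h
    have := fmin_le (subset_blockOf_fmin hα hβ hLL.1 hV (fmin_mem (hα.nonempty hV)))
    omega
  · have := fmin_blockOf_lt hα hβ hLL hV hns
    omega

/-- Inside one block `W` of `β`, a crossing `a < b < c < d` of `ψ(V)` and `ψ(V')` is pulled back
to points of `V` and `V'` between consecutive predecessors, which still cross; when `a = min W`,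
the block `V` contains `max W`, which serves as the fourth point. -/
lemma relink_not_isCrossing (hα : IsNCPartition n α) (hβ : IsNCPartition n β) (hLL : LL α β) :
    ¬ IsCrossing (relink α β) := by
  rintro ⟨A, hA, B, hB, hne, a, ha, b, hb, c, hc, d, hd, h₁, h₂, h₃⟩
  obtain ⟨V, hV, rfl⟩ := mem_image.mp hA
  obtain ⟨V', hV', rfl⟩ := mem_image.mp hB
  have hVV' : V ≠ V' := fun e => hne (e ▸ rfl)
  obtain ⟨W, hW, hVW⟩ := hLL.1 V hV
  obtain ⟨W', hW', hVW'⟩ := hLL.1 V' hV'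
  have hWV : blockOf β (fmin V) = W := blockOf_eq hβ.1 hW (hVW (fmin_mem (hα.nonempty hV)))
  have hWV' : blockOf β (fmin V') = W' := blockOf_eq hβ.1 hW' (hVW' (fmin_mem (hα.nonempty hV')))
  have haW := hWV ▸ relinkBlock_subset hα hβ hLL.1 hV ha
  have hcW := hWV ▸ relinkBlock_subset hα hβ hLL.1 hV hc
  have hbW := hWV' ▸ relinkBlock_subset hα hβ hLL.1 hV' hb
  have hdW := hWV' ▸ relinkBlock_subset hα hβ hLL.1 hV' hd
  by_cases hWW : W = W'
  swap
  · exact hβ.2 ⟨W, hW, W', hW', hWW, a, haW, b, hbW, c, hcW, d, hdW, h₁, h₂, h₃⟩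
  subst hWW
  have hWa := fmin_le haW
  obtain ⟨tb, htb, htb₁, htb₂⟩ := exists_mem_between_prevInBlock hα hβ hV' hW hVW' hb (by omega)
  obtain ⟨tc, htc, htc₁, htc₂⟩ := exists_mem_between_prevInBlock hα hβ hV hW hVW hc (by omega)
  obtain ⟨td, htd, htd₁, htd₂⟩ := exists_mem_between_prevInBlock hα hβ hV' hW hVW' hd (by omega)
  have hbc := le_prevInBlock hbW h₂
  have hcd := le_prevInBlock hcW h₃
  have hne' : ∀ {s t : ℕ}, s ∈ V → t ∈ V' → s ≠ t := fun hs ht e =>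
    hVV' (hα.eq_of_mem_of_mem hV hV' hs (e ▸ ht))
  have htbc : tb < tc := lt_of_le_of_ne (by omega) (hne' htc htb).symm
  have htcd : tc < td := lt_of_le_of_ne (by omega) (hne' htc htd)
  by_cases haf : a = fmin W
  · have hmax := hWV ▸ fmax_mem_of_fmin_mem_relinkBlock hα hβ hLL hV (by rw [hWV, ← haf]; exact ha)
    have htdmax : td < fmax W := lt_of_le_of_ne (by have := le_fmax hdW; omega)
      (hne' hmax htd).symm
    exact hα.2 ⟨V', hV', V, hV, hVV'.symm, tb, htb, tc, htc, td, htd, _, hmax, htbc, htcd, htdmax⟩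
  · obtain ⟨ta, hta, -, hta₂⟩ := exists_mem_between_prevInBlock hα hβ hV hW hVW ha haf
    have hab := le_prevInBlock haW h₁
    have htab : ta < tb := lt_of_le_of_ne (by omega) (hne' hta htb)
    exact hα.2 ⟨V, hV, V', hV', hVV', ta, hta, tb, htb, tc, htc, td, htd, htab, htbc, htcd⟩

lemma relink_isNCL (hα : IsNCPartition n α) (hβ : IsNCPartition n β) (hLL : LL α β) :
    IsNCL n (relink α β) :=
  ⟨relink_isLinkedPartitionOfSet hα hβ hLL, relink_not_isCrossing hα hβ hLL⟩

end RelinkNCL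

section RelinkInverse

variable {n : ℕ} {α β : Finset (Finset ℕ)} {V W : Finset ℕ} {m x y : ℕ}

lemma conn_relink_fmin (hα : IsNCPartition n α) (hβ : IsNCPartition n β) (hLL : LL α β)
    (hW : W ∈ β) (hx : x ∈ W) : Conn (relink α β) x (fmin W) := by
  induction x using Nat.strong_induction_on with
  | _ x ih =>
    obtain ⟨V, hV, hpV, hxV⟩ := exists_mem_image_permOf hα hβ hW hx
    have hWV : blockOf β (fmin V) = W := hβ.eq_of_mem_of_mem (blockOf_fmin_mem hα hβ hLL.1 hV) hW
      (subset_blockOf_fmin hα hβ hLL.1 hV hpV) (prevInBlock_mem hx)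
    have hψV : relinkBlock β V ∈ relink α β := mem_image_of_mem _ hV
    have hxψ := image_permOf_subset_relinkBlock hxV
    by_cases hs : fmax (blockOf β (fmin V)) ∈ V
    · have hmin := fmin_blockOf_mem_image_permOf hα hβ hLL.1 hV hs
      rw [hWV] at hmin
      exact Conn.of_mem hψV hxψ (image_permOf_subset_relinkBlock hmin)
    · have hmV : fmin V ∈ relinkBlock β V := by
        rw [relinkBlock_of_fmax_notMem hs]; exact mem_insert_self _ _
      have hmW : fmin V ∈ W := hWV ▸ subset_blockOf_fmin hα hβ hLL.1 hV (fmin_mem (hα.nonempty hV))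
      exact (Conn.of_mem hψV hxψ hmV).trans
        (ih _ (fmin_lt_of_mem_image_permOf hα hβ hLL.1 hV hs hxV) hmW)

lemma mem_of_conn_relink (hα : IsNCPartition n α) (hβ : IsNCPartition n β) (hαβ : Refines α β)
    (hW : W ∈ β) (hxy : Conn (relink α β) x y) (hx : x ∈ W) : y ∈ W := by
  refine (hxy.iff_of_forall_mem (· ∈ W) ?_).mp hx
  intro A hA p hp q hq hpW
  obtain ⟨V, hV, rfl⟩ := mem_image.mp hA
  rw [← hβ.eq_of_mem_of_mem (blockOf_fmin_mem hα hβ hαβ hV) hW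
    (relinkBlock_subset hα hβ hαβ hV hp) hpW]
  exact relinkBlock_subset hα hβ hαβ hV hq

lemma component_relink (hα : IsNCPartition n α) (hβ : IsNCPartition n β) (hLL : LL α β)
    (hW : W ∈ β) (hm : m ∈ W) : component n (relink α β) m = W := by
  ext z
  rw [mem_component]
  refine ⟨fun ⟨_, hz⟩ => mem_of_conn_relink hα hβ hLL.1 hW hz hm, fun hz => ⟨hβ.subset hW hz, ?_⟩⟩
  exact (conn_relink_fmin hα hβ hLL hW hm).trans (conn_relink_fmin hα hβ hLL hW hz).symm

lemma genPart_relink (hα : IsNCPartition n α) (hβ : IsNCPartition n β) (hLL : LL α β) :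
    genPart (relink α β) = β := by
  ext W
  rw [(relink_isNCL hα hβ hLL).mem_genPart]
  constructor
  · rintro ⟨m, hm, rfl⟩
    obtain ⟨W, hW, hmW⟩ := hβ.exists_mem hm
    rwa [component_relink hα hβ hLL hW hmW]
  · intro hW
    obtain ⟨m, hm⟩ := hβ.nonempty hW
    exact ⟨m, hβ.subset hW hm, component_relink hα hβ hLL hW hm⟩

lemma singlyCovered_fmin_relinkBlock (hα : IsNCPartition n α) (hβ : IsNCPartition n β)
    (hLL : LL α β) (hV : V ∈ α) (hs : fmax (blockOf β (fmin V)) ∈ V) :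
    SinglyCovered (relink α β) (fmin (relinkBlock β V)) := by
  rw [fmin_relinkBlock_of_fmax_mem hα hβ hLL.1 hV hs, SinglyCovered, coverCount, card_eq_one]
  refine ⟨relinkBlock β V, ext fun A => ?_⟩
  simp only [mem_filter, mem_singleton, relink, mem_image]
  constructor
  · rintro ⟨⟨V', hV', rfl⟩, hmem⟩
    have hmin := subset_blockOf_fmin hα hβ hLL.1 hV ((fmax_mem_iff_fmin_mem hα hβ hLL hV).mp hs)
    have hW : blockOf β (fmin V') = blockOf β (fmin V) :=
      hβ.eq_of_mem_of_mem (blockOf_fmin_mem hα hβ hLL.1 hV') (blockOf_fmin_mem hα hβ hLL.1 hV)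
        (relinkBlock_subset hα hβ hLL.1 hV' hmem) hmin
    have hs' := fmax_mem_of_fmin_mem_relinkBlock hα hβ hLL hV' (by rwa [hW])
    rw [hW] at hs'
    rw [hα.eq_of_mem_of_mem hV' hV hs' hs]
  · rintro rfl
    exact ⟨⟨V, hV, rfl⟩,
      image_permOf_subset_relinkBlock (fmin_blockOf_mem_image_permOf hα hβ hLL.1 hV hs)⟩

lemma not_singlyCovered_fmin_relinkBlock (hα : IsNCPartition n α) (hβ : IsNCPartition n β)
    (hLL : LL α β) (hV : V ∈ α) (hns : fmax (blockOf β (fmin V)) ∉ V) :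
    ¬ SinglyCovered (relink α β) (fmin (relinkBlock β V)) := by
  rw [fmin_relinkBlock_of_fmax_notMem hα hβ hLL.1 hV hns]
  have hmV := subset_blockOf_fmin hα hβ hLL.1 hV (fmin_mem (hα.nonempty hV))
  obtain ⟨V', hV', hpV', hmV'⟩ :=
    exists_mem_image_permOf hα hβ (blockOf_fmin_mem hα hβ hLL.1 hV) hmV
  have hprev := prevInBlock_lt hmV (fmin_blockOf_lt hα hβ hLL hV hns).ne'
  have hne : relinkBlock β V ≠ relinkBlock β V' := fun e => by
    have h := fmin_relinkBlock_le hα hβ hLL.1 hV'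
    rw [← e, fmin_relinkBlock_of_fmax_notMem hα hβ hLL.1 hV hns] at h
    have := fmin_le hpV'
    omega
  have hmem : fmin V ∈ relinkBlock β V := by
    rw [relinkBlock_of_fmax_notMem hns]; exact mem_insert_self _ _
  intro hs
  exact hne (hs.eq_of_mem (mem_image_of_mem _ hV) (mem_image_of_mem _ hV') hmem
    (image_permOf_subset_relinkBlock hmV'))

lemma unlink_relink (hα : IsNCPartition n α) (hβ : IsNCPartition n β) (hLL : LL α β) :
    unlink (relink α β) = mapPart (permOf β) α := by
  rw [unlink_eq_image, relink, image_image, mapPart]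
  refine image_congr fun V hV => ?_
  show unlinkBlock (relink α β) (relinkBlock β V) = V.image (permOf β)
  by_cases hs : fmax (blockOf β (fmin V)) ∈ V
  · rw [unlinkBlock_of_singlyCovered (singlyCovered_fmin_relinkBlock hα hβ hLL hV hs),
      relinkBlock_of_fmax_mem hs]
  · rw [unlinkBlock_of_not_singlyCovered (not_singlyCovered_fmin_relinkBlock hα hβ hLL hV hs),
      fmin_relinkBlock_of_fmax_notMem hα hβ hLL.1 hV hs, relinkBlock_of_fmax_notMem hs,
      erase_insert (fmin_notMem_image_permOf hα hβ hLL.1 hV hs)]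

lemma cycUnlink_relink (hα : IsNCPartition n α) (hβ : IsNCPartition n β) (hLL : LL α β) :
    cycUnlink (relink α β) = α := by
  rw [cycUnlink, genPart_relink hα hβ hLL, unlink_relink hα hβ hLL, mapPart, mapPart, image_image]
  exact (image_congr fun V hV => image_permOfInv_image_permOf hβ.1
    (blockOf_fmin_mem hα hβ hLL.1 hV) (subset_blockOf_fmin hα hβ hLL.1 hV)).trans image_id

end RelinkInverse

theorem stmt0_general (n : ℕ) :
    Set.BijOn (fun π => (cycUnlink π, genPart π))
      {π : Finset (Finset ℕ) | IsNCL n π}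
      {p : Finset (Finset ℕ) × Finset (Finset ℕ) |
        IsNCPartition n p.1 ∧ IsNCPartition n p.2 ∧ LL p.1 p.2} := by
  refine Set.InvOn.bijOn (f' := fun p => relink p.1 p.2) ⟨?_, ?_⟩ ?_ ?_
  · intro π hπ
    exact hπ.relink_cycUnlink_genPart
  · rintro ⟨α, β⟩ ⟨hα, hβ, hLL⟩
    exact Prod.ext (cycUnlink_relink hα hβ hLL) (genPart_relink hα hβ hLL)
  · intro π hπ
    exact ⟨hπ.cycUnlink_isNCPartition, hπ.genPart_isNCPartition, hπ.cycUnlink_LL⟩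
  · rintro ⟨α, β⟩ ⟨hα, hβ, hLL⟩
    exact relink_isNCL hα hβ hLL

/-- For every positive integer `n`, the map `π ↦ (π°, π̂)` is a
bijection from `NCL(n)` onto `{(α, β) : α, β ∈ NC(n), α ≪ β}`. -/
theorem stmt0 (n : ℕ) (hn : 0 < n) :
    Set.BijOn (fun π => (cycUnlink π, genPart π))
      {π : Finset (Finset ℕ) | IsNCL n π}
      {p : Finset (Finset ℕ) × Finset (Finset ℕ) |
        IsNCPartition n p.1 ∧ IsNCPartition n p.2 ∧ LL p.1 p.2} :=
  stmt0_general n
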